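/- Fix N ≥ 1 and δ ∈ {1, −1}. Let A, T be invertible N×N complex matrices with A⁻¹T = TA and T·T = δ·Iₙ. Let q : ℤ × ℝ → ℂ be differentiable in t and β : ℤ × ℝ → ℂ \ {0} with β² = 1 − δq². Suppose Φ : ℤ × ℝ → ℂᴺ is differentiable in t and satisfies the reduced system Φ(n+1,t) = β(n,t)⁻¹·A·Φ(n,t) + β(n,t)⁻¹·q(n,t)·T·Φ(n,t) and 2∂ₜΦ(n,t) = (A² − A⁻²)Φ(n,t) + 2(q(n,t)·A + q(n−1,t)·A⁻¹)·T·Φ(n,t). Then the pair (Φ, Ψ) with Ψ(n,t) := T·Φ(n,t) satisfies the full matrix system with background r := δq: Φ(n+1) = β(n)⁻¹(AΦ(n) + q(n)Ψ(n)), Ψ(n+1) = β(n)⁻¹(δq(n)Φ(n) + A⁻¹Ψ(n)), 2∂ₜΦ(n) = (A² − A⁻² + (r(n)q(n−1) − q(n)r(n−1)))Φ(n) + 2(q(n)A + q(n−1)A⁻¹)Ψ(n), 2∂ₜΨ(n) = 2(r(n−1)A + r(n)A⁻¹)Φ(n) + (A⁻² − A² − (r(n)q(n−1) − q(n)r(n−1)))Ψ(n).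 -/
import Mathlib


open Matrix

/-- The matrix Lax system (discrete spectral problem plus time evolution) with data
`(A, q, r, β)`. -/
def MatrixLaxSystem (N : ℕ) (A : Matrix (Fin N) (Fin N) ℂ) (q r β : ℤ × ℝ → ℂ)
    (Φ Ψ : ℤ × ℝ → Fin N → ℂ) : Prop :=
  (∀ (n : ℤ) (t : ℝ),
      Φ (n + 1, t) = (β (n, t))⁻¹ • (A.mulVec (Φ (n, t)) + q (n, t) • Ψ (n, t))) ∧
  (∀ (n : ℤ) (t : ℝ),
      Ψ (n + 1, t) = (β (n, t))⁻¹ • (r (n, t) • Φ (n, t) + A⁻¹.mulVec (Ψ (n, t)))) ∧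
  (∀ (n : ℤ) (t : ℝ),
      (fun i => 2 * deriv (fun u => Φ (n, u) i) t) =
        (A ^ 2 - A⁻¹ ^ 2).mulVec (Φ (n, t))
          + (r (n, t) * q (n - 1, t) - q (n, t) * r (n - 1, t)) • Φ (n, t)
          + (2 : ℂ) • (q (n, t) • A + q (n - 1, t) • A⁻¹).mulVec (Ψ (n, t))) ∧
  (∀ (n : ℤ) (t : ℝ),
      (fun i => 2 * deriv (fun u => Ψ (n, u) i) t) =
        (2 : ℂ) • (r (n - 1, t) • A + r (n, t) • A⁻¹).mulVec (Φ (n, t))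
          + (A⁻¹ ^ 2 - A ^ 2).mulVec (Ψ (n, t))
          - (r (n, t) * q (n - 1, t) - q (n, t) * r (n - 1, t)) • Ψ (n, t))

/-- The verification of Section 4 (classical real reduction): if `Φ` solves the reduced
system and `Ψ := TΦ` with `A⁻¹T = TA`, `TT = δI`, then `(Φ, Ψ)` solves the full matrix
Lax system with background `r = δq`. -/
theorem reduced_system_gives_full_system_real
    (N : ℕ) (hN : 1 ≤ N) (δ : ℂ) (hδ : δ = 1 ∨ δ = -1)
    (A T : Matrix (Fin N) (Fin N) ℂ)
    (hA : IsUnit A.det) (hT : IsUnit T.det)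
    (hAT : A⁻¹ * T = T * A)
    (hTT : T * T = δ • (1 : Matrix (Fin N) (Fin N) ℂ))
    (q β : ℤ × ℝ → ℂ)
    (hqd : ∀ (n : ℤ) (t : ℝ), DifferentiableAt ℝ (fun u => q (n, u)) t)
    (hβ0 : ∀ p : ℤ × ℝ, β p ≠ 0)
    (hβ2 : ∀ p : ℤ × ℝ, β p ^ 2 = 1 - δ * q p ^ 2)
    (Φ : ℤ × ℝ → Fin N → ℂ)
    (hΦd : ∀ (n : ℤ) (t : ℝ) (i : Fin N), DifferentiableAt ℝ (fun u => Φ (n, u) i) t)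
    (hΦ1 : ∀ (n : ℤ) (t : ℝ),
        Φ (n + 1, t) = (β (n, t))⁻¹ • A.mulVec (Φ (n, t))
          + (β (n, t))⁻¹ • q (n, t) • T.mulVec (Φ (n, t)))
    (hΦt : ∀ (n : ℤ) (t : ℝ),
        (fun i => 2 * deriv (fun u => Φ (n, u) i) t) =
          (A ^ 2 - A⁻¹ ^ 2).mulVec (Φ (n, t))
            + (2 : ℂ) • (q (n, t) • A + q (n - 1, t) • A⁻¹).mulVec
                (T.mulVec (Φ (n, t)))) :
    MatrixLaxSystem N A q (fun p => δ * q p) β Φ (fun p => T.mulVec (Φ p)) := by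
  have hTA : T * A = A⁻¹ * T := hAT.symm
  have hTAi : T * A⁻¹ = A * T := by
    calc T * A⁻¹ = A * A⁻¹ * T * A⁻¹ := by rw [Matrix.mul_nonsing_inv A hA, Matrix.one_mul]
    _ = A * (T * A) * A⁻¹ := by rw [Matrix.mul_assoc A, hAT]
    _ = A * T * (A * A⁻¹) := by rw [← Matrix.mul_assoc A T A, Matrix.mul_assoc (A * T) A A⁻¹]
    _ = A * T := by rw [Matrix.mul_nonsing_inv A hA, Matrix.mul_one]
  have hTA2 : T * A ^ 2 = A⁻¹ ^ 2 * T := by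
    rw [sq, sq, ← Matrix.mul_assoc, hTA, Matrix.mul_assoc, hTA, ← Matrix.mul_assoc]
  have hTAi2 : T * A⁻¹ ^ 2 = A ^ 2 * T := by
    rw [sq, sq, ← Matrix.mul_assoc, hTAi, Matrix.mul_assoc, hTAi, ← Matrix.mul_assoc]
  have M1 : T * (A ^ 2 - A⁻¹ ^ 2) = (A⁻¹ ^ 2 - A ^ 2) * T := by
    rw [Matrix.mul_sub, Matrix.sub_mul, hTA2, hTAi2]
  have M2 : ∀ a b : ℂ, T * ((a • A + b • A⁻¹) * T) = δ • (b • A + a • A⁻¹) := by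
    intro a b
    rw [← Matrix.mul_assoc, Matrix.mul_add, Matrix.mul_smul, Matrix.mul_smul, hTA, hTAi,
      Matrix.add_mul, Matrix.smul_mul, Matrix.smul_mul, Matrix.mul_assoc, Matrix.mul_assoc,
      hTT]
    rw [smul_add]
    rw [Matrix.mul_smul, Matrix.mul_smul, Matrix.mul_one, Matrix.mul_one, smul_comm _ δ,
      smul_comm _ δ, add_comm]
  refine ⟨?_, ?_, ?_, ?_⟩
  · intro n t
    simp only []
    rw [hΦ1 n t]
    module
  · intro n t
    simp only []
    rw [hΦ1 n t, Matrix.mulVec_add, Matrix.mulVec_smul, Matrix.mulVec_smul, Matrix.mulVec_smul,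
      Matrix.mulVec_mulVec, Matrix.mulVec_mulVec, hTA, hTT, smul_add, add_comm]
    congr 1
    · rw [Matrix.smul_mulVec, Matrix.one_mulVec]
      module
    · rw [← Matrix.mulVec_mulVec]
  · intro n t
    simp only []
    have h0 : (δ * q (n, t) * q (n - 1, t) - q (n, t) * (δ * q (n - 1, t))) = 0 := by ring
    rw [hΦt n t, h0, zero_smul, add_zero]
  · intro n t
    simp only []
    have hd : (fun i => 2 * deriv (fun u => T.mulVec (Φ (n, u)) i) t) =
        T.mulVec (fun i => 2 * deriv (fun u => Φ (n, u) i) t) := by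
      funext i
      have heq : (fun u => T.mulVec (Φ (n, u)) i) = fun u => ∑ j, T i j * Φ (n, u) j := by
        funext u; simp [Matrix.mulVec, dotProduct]
      rw [heq, deriv_fun_sum (fun j _ => ((hΦd n t j).const_mul (T i j)))]
      have hr : T.mulVec (fun i => 2 * deriv (fun u => Φ (n, u) i) t) i
          = ∑ j, T i j * (2 * deriv (fun u => Φ (n, u) j) t) := by
        simp [Matrix.mulVec, dotProduct]
      rw [hr, Finset.mul_sum]
      refine Finset.sum_congr rfl fun j _ => ?_
      rw [deriv_const_mul _ (hΦd n t j)]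
      ring
    rw [hd, hΦt n t, Matrix.mulVec_add, Matrix.mulVec_smul,
      Matrix.mulVec_mulVec, Matrix.mulVec_mulVec, Matrix.mulVec_mulVec,
      Matrix.mul_assoc, M1, M2]
    have h0 : (δ * q (n, t) * q (n - 1, t) - q (n, t) * (δ * q (n - 1, t))) = 0 := by ring
    rw [h0, zero_smul, sub_zero]
    have hM : ((δ * q (n - 1, t)) • A + (δ * q (n, t)) • A⁻¹)
        = δ • (q (n - 1, t) • A + q (n, t) • A⁻¹) := by
      rw [smul_add, smul_smul, smul_smul]
    rw [hM, ← Matrix.mulVec_mulVec, add_comm]
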